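/- arXiv:2308.05167 — 3 statements merged into one kernel-verified Lean document; each statement's English description precedes it below -/
import Mathlib

section
/- Theorem 1 (main theorem). Let r ≥ 1. Define the banded weight matrix 𝒜 as the ℕ×ℕ lower-triangular matrix with 𝒜 i j = a i (i−j) when 0 ≤ i−j ≤ ℓ and 𝒜 i j = 0 otherwise. If 𝒜 is totally positive of order r, then the weighted lattice-path matrix M is totally positive of order r. Consequently, if 𝒜 is totally positive, then M is totally positive. -/
open Finset

/-- A multivariate polynomial with real coefficients is *nonnegative* if all of
its coefficients are nonnegative. -/
def PolyNonneg {σ : Type*} (p : MvPolynomial σ ℝ) : Prop :=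
  ∀ m, 0 ≤ p.coeff m

/-- An `ℕ × ℕ` matrix with entries in `MvPolynomial σ ℝ` is *totally positive*
if every minor (taken along strictly increasing row and column indices) is a
nonnegative polynomial. -/
def TP {σ : Type*} (A : ℕ → ℕ → MvPolynomial σ ℝ) : Prop :=
  ∀ r : ℕ, 1 ≤ r → ∀ ρ κ : Fin r → ℕ, StrictMono ρ → StrictMono κ →
    PolyNonneg (Matrix.of fun i j : Fin r => A (ρ i) (κ j)).det

/-- Total positivity of order `r`: all minors of size at most `r` are
nonnegative polynomials. -/
def TPOrder {σ : Type*} (A : ℕ → ℕ → MvPolynomial σ ℝ) (r : ℕ) : Prop :=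
  ∀ s : ℕ, 1 ≤ s → s ≤ r → ∀ ρ κ : Fin s → ℕ, StrictMono ρ → StrictMono κ →
    PolyNonneg (Matrix.of fun i j : Fin s => A (ρ i) (κ j)).det

/-- The weighted lattice-path matrix `M`:
`M n 0 = ∏_{i=1}^n b i`, `M n k = 0` for `k ≥ 1` and `n < t`, and
`M n k = Σ_{i=0}^{ℓ} (a n i) * M (n-t-i) (k-1) + (b n) * M (n-1) k`
for `n ≥ t`, `k ≥ 1`, where summands with a negative first index vanish. -/
def latticeM {R : Type*} [CommRing R] (t ℓ : ℕ) (a : ℕ → ℕ → R) (b : ℕ → R) :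
    ℕ → ℕ → R
  | n, 0 => ∏ i ∈ Finset.Icc 1 n, b i
  | 0, k + 1 => if t = 0 then a 0 0 * latticeM t ℓ a b 0 k else 0
  | n + 1, k + 1 =>
      if n + 1 < t then 0
      else (∑ i ∈ Finset.range (ℓ + 1),
              if t + i ≤ n + 1 then a (n + 1) i * latticeM t ℓ a b (n + 1 - t - i) k
              else 0)
        + b (n + 1) * latticeM t ℓ a b n (k + 1)
  termination_by n k => (k, n)

/-!
Write `C n m = ∏_{m < j ≤ n} b j` (and `C n m = 0` for `n < m`). Unrolling the `b`-steps of the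
recurrence factors `M = C · [e₀ | 𝒜' · M]`, where `𝒜'` is `𝒜` with its columns shifted by `t` and
`[e₀ | X]` is `X` preceded by the unit column `e₀`; all sums are finite because `C` and `𝒜'` are
lower triangular. The matrix `C` is totally positive since its minors are either `0` or products
of entries, and a minor of `[e₀ | X]` is `0` or a minor of `X`. Hence by the Cauchy–Binet formula
the positivity of the minors of order `≤ r` passes from the columns `< K` of `M` to the columns
`< K + 1`.
-/

open Matrix Equiv

namespace Tuple

variable {α : Type*} [LinearOrder α] {n : ℕ}

lemma strictMono_comp_sort_of_injective {f : Fin n → α} (hf : Function.Injective f) :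
    StrictMono (f ∘ sort f) :=
  (monotone_sort f).strictMono_of_injective (hf.comp (sort f).injective)

lemma sort_comp_perm_of_strictMono {e : Fin n → α} (he : StrictMono e) (τ : Perm (Fin n)) :
    sort (e ∘ τ) = τ⁻¹ := by
  have h : (e ∘ τ) ∘ ⇑τ⁻¹ = (e ∘ τ) ∘ sort (e ∘ τ) :=
    comp_sort_eq_comp_iff_monotone.mpr (by simpa [Function.comp_assoc] using he.monotone)
  ext i
  exact congrArg Fin.val ((he.injective.comp τ.injective) (congrFun h i)).symm

end Tuple

namespace Matrix

variable {R : Type*} [CommRing R] {s N : ℕ}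

theorem det_eq_zero_of_col_eq_mul {n : Type*} [Fintype n] [DecidableEq n]
    {M : Matrix n n R} {i j : n} (hij : i ≠ j) (c : R) (h : ∀ k, M k i = c * M k j) :
    M.det = 0 := by
  have hM : M = M.updateCol i (c • fun k => M k j) := by
    ext k l
    by_cases hl : l = i
    · subst hl; simp [h]
    · simp [hl]
  rw [hM, det_updateCol_smul, det_updateCol_eq_zero hij.symm, mul_zero]

theorem det_mul_eq_sum_prod_mul_det_submatrix (A : Matrix (Fin s) (Fin N) R)
    (B : Matrix (Fin N) (Fin s) R) :
    (A * B).det = ∑ f : Fin s → Fin N, (∏ i, A i (f i)) * (B.submatrix f id).det := by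
  have hrows : A * B = fun i => ∑ m, A i m • B m := by
    funext i j
    simp [mul_apply]
  change detRowAlternating _ = _
  rw [hrows, ← AlternatingMap.coe_multilinearMap, MultilinearMap.map_sum]
  refine sum_congr rfl fun f _ => ?_
  rw [MultilinearMap.map_smul_univ]
  rfl

open Classical in
/-- The Cauchy–Binet formula. -/
theorem det_mul_eq_sum_strictMono (A : Matrix (Fin s) (Fin N) R) (B : Matrix (Fin N) (Fin s) R) :
    (A * B).det = ∑ e : Fin s → Fin N with StrictMono e,
      (A.submatrix id e).det * (B.submatrix e id).det := by
  set F : (Fin s → Fin N) → R := fun f => (∏ i, A i (f i)) * (B.submatrix f id).det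
  have hinj : ∑ f, F f = ∑ f : Fin s → Fin N with Function.Injective f, F f := by
    refine (sum_subset (filter_subset _ _) fun f _ hf => ?_).symm
    obtain ⟨i, j, hij, hne⟩ := Function.not_injective_iff.mp (by simpa using hf)
    have hdet : (B.submatrix f id).det = 0 := det_zero_of_row_eq hne (funext fun k => by simp [hij])
    simp only [F, hdet, mul_zero]
  have hfactor : ∑ f : Fin s → Fin N with Function.Injective f, F f
      = ∑ p ∈ univ.filter (fun e : Fin s → Fin N => StrictMono e) ×ˢ
            (univ : Finset (Perm (Fin s))),
          F (p.1 ∘ p.2) := by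
    -- an injective `f` is uniquely `e ∘ τ` with `e` strictly monotone, namely `f` sorted
    refine sum_nbij' (fun f => (f ∘ Tuple.sort f, (Tuple.sort f)⁻¹)) (fun p => p.1 ∘ p.2)
      ?_ ?_ ?_ ?_ fun f _ => by simp [Function.comp_assoc]
    · intro f hf
      simp only [mem_product, mem_filter_univ, mem_univ, and_true] at hf ⊢
      exact Tuple.strictMono_comp_sort_of_injective hf
    · intro p hp
      simp only [mem_product, mem_filter_univ, mem_univ, and_true] at hp ⊢
      exact hp.injective.comp p.2.injective
    · intro f _
      simp [Function.comp_assoc]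
    · intro p hp
      simp only [mem_product, mem_filter_univ, mem_univ, and_true] at hp
      rw [Tuple.sort_comp_perm_of_strictMono hp]
      simp [Function.comp_assoc]
  rw [det_mul_eq_sum_prod_mul_det_submatrix, hinj, hfactor, sum_product]
  refine sum_congr rfl fun e _ => ?_
  have hperm : ∀ τ : Perm (Fin s), (B.submatrix (e ∘ τ) id).det
      = Perm.sign τ * (B.submatrix e id).det := fun τ => by
    rw [← det_permute]; rfl
  rw [← det_transpose (A.submatrix id e), det_apply', sum_mul]
  refine sum_congr rfl fun τ _ => ?_
  simp only [F, hperm, transpose_apply, submatrix_apply, id, Function.comp_apply]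
  ring

theorem det_mul_mem_of_minors_mem {S : Subsemiring R} (A : Matrix (Fin s) (Fin N) R)
    (B : Matrix (Fin N) (Fin s) R)
    (hA : ∀ e : Fin s → Fin N, StrictMono e → (A.submatrix id e).det ∈ S)
    (hB : ∀ e : Fin s → Fin N, StrictMono e → (B.submatrix e id).det ∈ S) :
    (A * B).det ∈ S := by
  classical
  rw [det_mul_eq_sum_strictMono]
  refine sum_mem fun e he => mul_mem (hA e ?_) (hB e ?_) <;> simpa using he

end Matrix

section Minors

variable {R : Type*} [CommRing R]

def minor (A : ℕ → ℕ → R) {s : ℕ} (ρ κ : Fin s → ℕ) : R :=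
  (Matrix.of fun i j => A (ρ i) (κ j)).det

def MinorsMem (S : Subsemiring R) (A : ℕ → ℕ → R) (r K : ℕ) : Prop :=
  ∀ s ≤ r, ∀ ρ κ : Fin s → ℕ, StrictMono ρ → StrictMono κ → (∀ j, κ j < K) → minor A ρ κ ∈ S

def truncMul (N : ℕ) (A B : ℕ → ℕ → R) (i j : ℕ) : R :=
  ∑ m ∈ range N, A i m * B m j

lemma minor_fin_zero (A : ℕ → ℕ → R) (ρ κ : Fin 0 → ℕ) : minor A ρ κ = 1 :=
  det_isEmpty

theorem minor_truncMul_mem {S : Subsemiring R} {A B : ℕ → ℕ → R} {N s : ℕ}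
    {ρ κ : Fin s → ℕ}
    (hA : ∀ g : Fin s → ℕ, StrictMono g → (∀ j, g j < N) → minor A ρ g ∈ S)
    (hB : ∀ g : Fin s → ℕ, StrictMono g → (∀ j, g j < N) → minor B g κ ∈ S) :
    minor (truncMul N A B) ρ κ ∈ S := by
  have hprod : minor (truncMul N A B) ρ κ
      = (of (fun i (m : Fin N) => A (ρ i) m) * of (fun (m : Fin N) j => B m (κ j))).det := by
    rw [minor]
    congr 1
    ext i j
    simp [truncMul, mul_apply, Fin.sum_univ_eq_sum_range (fun m => A (ρ i) m * B m (κ j))]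
  rw [hprod]
  exact det_mul_mem_of_minors_mem _ _
    (fun e he => hA _ (Fin.val_strictMono.comp he) fun j => (e j).isLt)
    (fun e he => hB _ (Fin.val_strictMono.comp he) fun j => (e j).isLt)

end Minors

section CumProd

variable {R : Type*} [CommRing R]

def cumProd (b : ℕ → R) (n m : ℕ) : R :=
  if m ≤ n then ∏ j ∈ Ioc m n, b j else 0

variable (b : ℕ → R)

lemma cumProd_of_lt {n m : ℕ} (h : n < m) : cumProd b n m = 0 :=
  if_neg (not_le.mpr h)

lemma cumProd_mul_cumProd {m k n : ℕ} (hmk : m ≤ k) (hkn : k ≤ n) :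
    cumProd b n k * cumProd b k m = cumProd b n m := by
  simp only [cumProd, if_pos hmk, if_pos hkn, if_pos (hmk.trans hkn)]
  rw [mul_comm, prod_Ioc_consecutive _ hmk hkn]

lemma cumProd_succ_left (n m : ℕ) :
    cumProd b (n + 1) m = b (n + 1) * cumProd b n m + if m = n + 1 then 1 else 0 := by
  rcases lt_trichotomy m (n + 1) with h | rfl | h
  · simp only [cumProd, if_pos h.le, if_pos (Nat.le_of_lt_succ h), if_neg h.ne,
      prod_Ioc_succ_top (Nat.le_of_lt_succ h)]
    ring
  · simp [cumProd]
  · simp [cumProd, show ¬ m ≤ n + 1 by omega, show ¬ m ≤ n by omega, h.ne']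

variable {b}

theorem minor_cumProd_mem {S : Subsemiring R} (hb : ∀ n, b n ∈ S) :
    ∀ {s : ℕ} (ρ κ : Fin s → ℕ), StrictMono ρ → StrictMono κ → minor (cumProd b) ρ κ ∈ S := by
  have hC : ∀ n m, cumProd b n m ∈ S := fun n m => by
    unfold cumProd; split_ifs
    exacts [prod_mem fun j _ => hb j, zero_mem S]
  intro s
  induction s with
  | zero => intro ρ κ _ _; rw [minor_fin_zero]; exact one_mem S
  | succ s ih =>
    intro ρ κ hρ hκ
    by_cases hsep : ∀ j : Fin (s + 1), j ≠ 0 → ρ 0 < κ j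
    · rw [minor, det_succ_row_zero, sum_eq_single 0 (fun j _ hj => ?_) (by simp)]
      · simp only [Fin.val_zero, pow_zero, one_mul, of_apply, Fin.succAbove_zero]
        exact mul_mem (hC _ _) (ih _ _ (hρ.comp Fin.strictMono_succ) (hκ.comp Fin.strictMono_succ))
      · simp [cumProd_of_lt b (hsep j hj)]
    · -- columns `0` and `j` are proportional, as `κ 0 < κ j ≤ ρ 0 ≤ ρ i`
      push Not at hsep
      obtain ⟨j, hj, hjρ⟩ := hsep
      have hκj : κ 0 ≤ κ j := hκ.monotone (Fin.zero_le j)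
      rw [minor, det_eq_zero_of_col_eq_mul hj.symm (cumProd b (κ j) (κ 0)) fun i => ?_]
      · exact zero_mem S
      · simp only [of_apply]
        rw [mul_comm, cumProd_mul_cumProd b hκj (hjρ.trans (hρ.monotone (Fin.zero_le i)))]

end CumProd

section LatticePaths

variable {R : Type*} [CommRing R]

def prependUnitCol (X : ℕ → ℕ → R) : ℕ → ℕ → R
  | m, 0 => if m = 0 then 1 else 0
  | m, k + 1 => X m k

lemma minor_prependUnitCol_of_pos (X : ℕ → ℕ → R) {s : ℕ} (ρ : Fin s → ℕ) {κ : Fin s → ℕ}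
    (hκ : ∀ j, 0 < κ j) : minor (prependUnitCol X) ρ κ = minor X ρ (fun j => κ j - 1) := by
  unfold minor
  congr 1
  ext i j
  obtain ⟨k, hk⟩ : ∃ k, κ j = k + 1 := ⟨κ j - 1, by have := hκ j; omega⟩
  simp [hk, prependUnitCol]

theorem minorsMem_prependUnitCol {S : Subsemiring R} {X : ℕ → ℕ → R} {r K : ℕ}
    (hX : MinorsMem S X r K) : MinorsMem S (prependUnitCol X) r (K + 1) := by
  have hpos : ∀ s ≤ r, ∀ ρ κ : Fin s → ℕ, StrictMono ρ → StrictMono κ → (∀ j, κ j < K + 1) →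
      (∀ j, 0 < κ j) → minor (prependUnitCol X) ρ κ ∈ S := by
    intro s hs ρ κ hρ hκ hK hκpos
    rw [minor_prependUnitCol_of_pos X ρ hκpos]
    refine hX s hs ρ _ hρ (fun i j hij => ?_) fun j => ?_
    · show κ i - 1 < κ j - 1
      have := hκ hij; have := hκpos i; omega
    · show κ j - 1 < K
      have := hK j; have := hκpos j; omega
  intro s hs ρ κ hρ hκ hK
  rcases s with _ | s
  · rw [minor_fin_zero]; exact one_mem S
  by_cases hκ0 : κ 0 = 0
  · -- column `0` of the minor vanishes below its first entry `[ρ 0 = 0]`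
    rw [minor, det_succ_column_zero, sum_eq_single 0 (fun i _ hi => ?_) (by simp)]
    · simp only [Fin.val_zero, pow_zero, one_mul, of_apply, hκ0, Fin.succAbove_zero]
      refine mul_mem (by rw [prependUnitCol]; split_ifs <;> simp)
        (hpos s (by omega) _ _ (hρ.comp Fin.strictMono_succ) (hκ.comp Fin.strictMono_succ)
          (fun j => hK _) fun j => ?_)
      simpa [hκ0] using hκ (Fin.succ_pos j)
    · have : ρ 0 < ρ i := hρ (Fin.pos_iff_ne_zero.mpr hi)
      simp [hκ0, prependUnitCol, show ρ i ≠ 0 by omega]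
  · exact hpos _ hs ρ κ hρ hκ hK fun j =>
      (Nat.pos_of_ne_zero hκ0).trans_le (hκ.monotone (Fin.zero_le j))

def bandMatrix (ℓ : ℕ) (a : ℕ → ℕ → R) (i j : ℕ) : R :=
  if j ≤ i ∧ i - j ≤ ℓ then a i (i - j) else 0

def shiftCols (t : ℕ) (A : ℕ → ℕ → R) (i j : ℕ) : R :=
  A i (j + t)

variable (t ℓ : ℕ) (a : ℕ → ℕ → R) (b : ℕ → R)

lemma latticeM_zero_right (n : ℕ) : latticeM t ℓ a b n 0 = cumProd b n 0 := by
  have hIcc : Icc 1 n = Ioc 0 n := by ext; simp [Nat.one_le_iff_ne_zero, Nat.pos_iff_ne_zero]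
  rcases n with _ | n <;> simp [latticeM, cumProd, hIcc]

lemma latticeM_succ_of_lt {n : ℕ} (h : n < t) (k : ℕ) : latticeM t ℓ a b n (k + 1) = 0 := by
  rcases n with _ | n
  · rw [latticeM, if_neg (by omega)]
  · rw [latticeM, if_pos h]

lemma latticeM_zero_succ {N : ℕ} (hN : 0 < N) (k : ℕ) :
    latticeM t ℓ a b 0 (k + 1)
      = truncMul N (shiftCols t (bandMatrix ℓ a)) (latticeM t ℓ a b) 0 k := by
  rw [latticeM, truncMul, sum_eq_single 0 (fun p _ hp => by simp [shiftCols, bandMatrix, hp]) (by simp [hN])]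
  rcases Nat.eq_zero_or_pos t with rfl | ht
  · simp [shiftCols, bandMatrix]
  · simp [shiftCols, bandMatrix, ht.ne']

lemma latticeM_succ_succ {N n : ℕ} (hn : n + 1 < N) (k : ℕ) :
    latticeM t ℓ a b (n + 1) (k + 1)
      = truncMul N (shiftCols t (bandMatrix ℓ a)) (latticeM t ℓ a b) (n + 1) k
        + b (n + 1) * latticeM t ℓ a b n (k + 1) := by
  rw [latticeM, truncMul]
  by_cases ht : n + 1 < t
  · rw [if_pos ht, latticeM_succ_of_lt t ℓ a b (by omega), mul_zero, add_zero,
      sum_eq_zero fun p _ => by simp [shiftCols, bandMatrix, show ¬ p + t ≤ n + 1 by omega]]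
  rw [if_neg ht]
  congr 1
  -- the summand with weight `a (n + 1) i` is the one with `p = n + 1 - t - i`
  simp only [shiftCols, bandMatrix, ite_mul, zero_mul, ← sum_filter]
  refine sum_nbij' (fun i => n + 1 - t - i) (fun p => n + 1 - (p + t)) ?_ ?_ ?_ ?_ ?_ <;>
    intro x hx <;> simp only [mem_filter, mem_range] at hx ⊢
  · omega
  · omega
  · omega
  · omega
  · rw [show n + 1 - (n + 1 - t - x + t) = x by omega]

variable {t ℓ a b}

theorem latticeM_succ_eq_truncMul {N : ℕ} (k : ℕ) : ∀ n < N, latticeM t ℓ a b n (k + 1)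
    = truncMul N (cumProd b) (truncMul N (shiftCols t (bandMatrix ℓ a)) (latticeM t ℓ a b)) n k
  | 0, hN => by
    rw [truncMul, sum_eq_single 0 (fun m _ hm => ?_) (by simp [hN]), latticeM_zero_succ t ℓ a b hN]
    · simp [cumProd]
    · rw [cumProd_of_lt b (Nat.pos_of_ne_zero hm), zero_mul]
  | n + 1, hn => by
    rw [latticeM_succ_succ t ℓ a b hn, latticeM_succ_eq_truncMul (N := N) k n (by omega)]
    set X := truncMul N (shiftCols t (bandMatrix ℓ a)) (latticeM t ℓ a b)
    simp only [truncMul, mul_sum, cumProd_succ_left, add_mul, sum_add_distrib, mul_assoc, ite_mul,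
      one_mul, zero_mul, sum_ite_eq', mem_range, if_pos hn]
    ring

theorem latticeM_eq_truncMul {N n : ℕ} (hn : n < N) (k : ℕ) :
    latticeM t ℓ a b n k = truncMul N (cumProd b)
      (prependUnitCol (truncMul N (shiftCols t (bandMatrix ℓ a)) (latticeM t ℓ a b))) n k := by
  rcases k with _ | k
  · simp [truncMul, prependUnitCol, latticeM_zero_right, show 0 < N by omega]
  · exact latticeM_succ_eq_truncMul k n hn

theorem minorsMem_latticeM {S : Subsemiring R} {r : ℕ}
    (hA : ∀ K, MinorsMem S (bandMatrix ℓ a) r K) (hb : ∀ n, b n ∈ S) (K : ℕ) :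
    MinorsMem S (latticeM t ℓ a b) r K := by
  induction K with
  | zero =>
    intro s _ ρ κ _ _ hκ
    rcases s with _ | s
    · rw [minor_fin_zero]; exact one_mem S
    · exact absurd (hκ 0) (Nat.not_lt_zero _)
  | succ K ih =>
    intro s hs ρ κ hρ hκ hK
    set N := univ.sup ρ + 1
    have hρN : ∀ i, ρ i < N := fun i => Nat.lt_succ_of_le (le_sup (mem_univ i))
    have hX : MinorsMem S (truncMul N (shiftCols t (bandMatrix ℓ a)) (latticeM t ℓ a b)) r K :=
      fun s hs g κ hg hκ hK => minor_truncMul_mem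
        (fun g' hg' hg'N => hA (N + t) s hs g (fun j => g' j + t) hg
          (fun i j hij => Nat.add_lt_add_right (hg' hij) t) fun j => by have := hg'N j; omega)
        (fun g' hg' _ => ih s hs g' κ hg' hκ hK)
    rw [show minor (latticeM t ℓ a b) ρ κ = minor (truncMul N (cumProd b) (prependUnitCol _)) ρ κ
      from congrArg det (ext fun i j => latticeM_eq_truncMul (hρN i) _)]
    exact minor_truncMul_mem (fun g hg _ => minor_cumProd_mem hb ρ g hρ hg)
      (fun g hg _ => minorsMem_prependUnitCol hX s hs g κ hg hκ hK)

end LatticePaths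

def nonnegPolys (σ : Type*) : Subsemiring (MvPolynomial σ ℝ) where
  carrier := {p | PolyNonneg p}
  zero_mem' m := by simp
  one_mem' m := by
    classical
    rw [MvPolynomial.coeff_one]
    split_ifs <;> norm_num
  add_mem' hp hq m := by simpa using add_nonneg (hp m) (hq m)
  mul_mem' hp hq m := by
    classical
    rw [MvPolynomial.coeff_mul]
    exact sum_nonneg fun x _ => mul_nonneg (hp _) (hq _)

section TotalPositivity

variable {σ : Type*}

lemma tpOrder_iff_minorsMem {A : ℕ → ℕ → MvPolynomial σ ℝ} {r : ℕ} :
    TPOrder A r ↔ ∀ K, MinorsMem (nonnegPolys σ) A r K := by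
  constructor
  · intro h K s hs ρ κ hρ hκ _
    rcases s with _ | s
    · rw [minor_fin_zero]; exact one_mem _
    · exact h (s + 1) (by omega) hs ρ κ hρ hκ
  · intro h s _ hs ρ κ hρ hκ
    exact h (univ.sup κ + 1) s hs ρ κ hρ hκ fun j => Nat.lt_succ_of_le (le_sup (mem_univ j))

lemma tp_iff_forall_tpOrder {A : ℕ → ℕ → MvPolynomial σ ℝ} : TP A ↔ ∀ r, TPOrder A r :=
  ⟨fun h _ s hs _ => h s hs, fun h r hr => h r r hr le_rfl⟩

end TotalPositivity

theorem latticeM_totallyPositive_of_bandMatrix_totallyPositive_general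
    {σ : Type*} (t ℓ : ℕ) (a : ℕ → ℕ → MvPolynomial σ ℝ) (b : ℕ → MvPolynomial σ ℝ)
    (hb : ∀ n, PolyNonneg (b n)) :
    (∀ r : ℕ, 1 ≤ r →
        TPOrder (fun i j => if j ≤ i ∧ i - j ≤ ℓ then a i (i - j) else 0) r →
        TPOrder (latticeM t ℓ a b) r) ∧
      (TP (fun i j => if j ≤ i ∧ i - j ≤ ℓ then a i (i - j) else 0) →
        TP (latticeM t ℓ a b)) := by
  have hTPOrder : ∀ r, TPOrder (bandMatrix ℓ a) r → TPOrder (latticeM t ℓ a b) r := fun r hA =>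
    tpOrder_iff_minorsMem.2 (minorsMem_latticeM (tpOrder_iff_minorsMem.1 hA) hb)
  exact ⟨fun r _ => hTPOrder r,
    fun hA => tp_iff_forall_tpOrder.2 fun r => hTPOrder r (tp_iff_forall_tpOrder.1 hA r)⟩

/-- **Theorem 1 (main theorem).**  If the banded weight matrix `𝒜`,
`𝒜 i j = a i (i - j)` for `0 ≤ i - j ≤ ℓ` and `0` otherwise, is totally
positive of order `r` (`r ≥ 1`), then the weighted lattice-path matrix `M` is
totally positive of order `r`; consequently if `𝒜` is totally positive then
`M` is totally positive. -/
theorem latticeM_totallyPositive_of_bandMatrix_totallyPositive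
    {σ : Type*} (t ℓ : ℕ) (a : ℕ → ℕ → MvPolynomial σ ℝ) (b : ℕ → MvPolynomial σ ℝ)
    (ha : ∀ n i, i ≤ ℓ → PolyNonneg (a n i)) (hb : ∀ n, PolyNonneg (b n)) :
    (∀ r : ℕ, 1 ≤ r →
        TPOrder (fun i j => if j ≤ i ∧ i - j ≤ ℓ then a i (i - j) else 0) r →
        TPOrder (latticeM t ℓ a b) r) ∧
      (TP (fun i j => if j ≤ i ∧ i - j ≤ ℓ then a i (i - j) else 0) →
        TP (latticeM t ℓ a b)) :=
  latticeM_totallyPositive_of_bandMatrix_totallyPositive_general t ℓ a b hb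
end

section
/- Theorem (tridiagonal case, part i). Suppose ℓ = 2 and there exist sequences of nonnegative polynomials α, β, λ, μ : ℕ → MvPolynomial σ ℝ such that a n 0 = (α n)·(λ n) for all n ≥ 0, a n 1 = (α n)·(μ n) + (β n)·(λ (n−1)) for all n ≥ 1, and a n 2 = (β n)·(μ (n−1)) for all n ≥ 2. Then the weighted lattice-path matrix M is totally positive. -/
open Finset

/-- The Toeplitz matrix of a sequence: `𝒯(c) i j = c (i - j)` for `i ≥ j`
and `0` otherwise. -/
def toeplitz {R : Type*} [CommRing R] (c : ℕ → R) : ℕ → ℕ → R :=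
  fun i j => if j ≤ i then c (i - j) else 0

/-!
Read column by column, the recurrence says that column `k + 1` of `M` arises from column `k` by
shifting it down `t` rows, applying the lower bidiagonal operators with diagonals `(λ, μ)` and
then `(α, β)` (this is where the factorization of the weights enters), and finally taking the
weighted prefix sum `Z n = X n + b n • Z (n - 1)`; column `0` is that prefix sum of the unit
vector `e₀`. Each of these operations, applied to the rows of a family of columns, keeps all row
minors nonnegative: the shift and the bidiagonal operators because multilinear expansion writes
the new minor as a nonnegative combination of old minors along weakly increasing row sets, and
the prefix sum because on finitely many rows it is a composite of elementary bidiagonal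
operators "add `b n` times row `n - 1` to row `n`". Induction on the column indices, peeling
off column `0` by a Laplace expansion, finishes the proof.
-/

section SequenceOperations

variable {R V : Type*} [Semiring R] [AddCommMonoid V] [Module R V]

def shiftSeq (s : ℕ) (X : ℕ → V) (n : ℕ) : V :=
  if s ≤ n then X (n - s) else 0

def bidiag (c d : ℕ → R) (X : ℕ → V) (n : ℕ) : V :=
  c n • X n + d n • shiftSeq 1 X n

def weightedPrefixSum (b : ℕ → R) (X : ℕ → V) : ℕ → V
  | 0 => X 0
  | n + 1 => X (n + 1) + b (n + 1) • weightedPrefixSum b X n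

@[simp]
theorem shiftSeq_zero (X : ℕ → V) : shiftSeq 0 X = X := by
  funext n; simp [shiftSeq]

theorem shiftSeq_shiftSeq (s s' : ℕ) (X : ℕ → V) :
    shiftSeq s (shiftSeq s' X) = shiftSeq (s' + s) X := by
  funext n
  simp only [shiftSeq]
  split_ifs <;> first | (exfalso; omega) | rfl | congr 1; omega

theorem eq_weightedPrefixSum {b : ℕ → R} {Y Z : ℕ → V}
    (h : ∀ n, Z n = Y n + b n • shiftSeq 1 Z n) : Z = weightedPrefixSum b Y := by
  funext n
  induction n with
  | zero => simpa [weightedPrefixSum, shiftSeq] using h 0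
  | succ n ih => simpa [weightedPrefixSum, shiftSeq, ih] using h (n + 1)

variable {ι : Type*}

theorem shiftSeq_apply (s : ℕ) (X : ℕ → ι → R) (n : ℕ) (j : ι) :
    shiftSeq s X n j = shiftSeq s (fun m => X m j) n := by
  unfold shiftSeq; split_ifs <;> rfl

theorem bidiag_apply (c d : ℕ → R) (X : ℕ → ι → R) (n : ℕ) (j : ι) :
    bidiag c d X n j = bidiag c d (fun m => X m j) n := by
  simp [bidiag, shiftSeq_apply]

theorem weightedPrefixSum_apply (b : ℕ → R) (X : ℕ → ι → R) (n : ℕ) (j : ι) :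
    weightedPrefixSum b X n j = weightedPrefixSum b (fun m => X m j) n := by
  induction n with
  | zero => rfl
  | succ n ih => simp [weightedPrefixSum, ih]

end SequenceOperations

section Minors

variable {R : Type*} [CommRing R] (S : Subsemiring R) {r : ℕ}

def MinorsIn (X : ℕ → Fin r → R) : Prop :=
  ∀ ρ : Fin r → ℕ, StrictMono ρ → (Matrix.of fun i => X (ρ i)).det ∈ S

variable {S} {X : ℕ → Fin r → R}

theorem MinorsIn.det_mem_of_monotone (hX : MinorsIn S X) {ρ : Fin r → ℕ} (hρ : Monotone ρ) :
    (Matrix.of fun i => X (ρ i)).det ∈ S := by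
  by_cases hinj : Function.Injective ρ
  · exact hX ρ (hρ.strictMono_of_injective hinj)
  · obtain ⟨i, j, hij, hne⟩ : ∃ i j, ρ i = ρ j ∧ i ≠ j := by
      simpa [Function.Injective] using hinj
    rw [Matrix.det_zero_of_row_eq hne (by funext; simp [hij])]
    exact S.zero_mem

theorem MinorsIn.det_shiftSeq_mem (hX : MinorsIn S X) {ρ s : Fin r → ℕ}
    (hρs : Monotone fun i => ρ i - s i) :
    (Matrix.of fun i => shiftSeq (s i) X (ρ i)).det ∈ S := by
  by_cases hzero : ∃ i, ρ i < s i
  · obtain ⟨i, hi⟩ := hzero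
    rw [Matrix.det_eq_zero_of_row_eq_zero i fun j => by simp [shiftSeq, Nat.not_le.2 hi]]
    exact S.zero_mem
  · push Not at hzero
    simpa [shiftSeq, hzero] using hX.det_mem_of_monotone hρs

theorem minorsIn_shiftSeq (hX : MinorsIn S X) (s : ℕ) : MinorsIn S (shiftSeq s X) :=
  fun _ hρ => hX.det_shiftSeq_mem (s := fun _ => s) fun _ _ hij =>
    Nat.sub_le_sub_right (hρ.monotone hij) s

theorem minorsIn_bidiag (hX : MinorsIn S X) {c d : ℕ → R} (hc : ∀ n, c n ∈ S)
    (hd : ∀ n, d n ∈ S) : MinorsIn S (bidiag c d X) := by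
  intro ρ hρ
  set w : Fin 2 → ℕ → R := ![c, d]
  have hrow : ∀ n, bidiag c d X n = ∑ e : Fin 2, w e n • shiftSeq e X n := by
    simp [bidiag, w, Fin.sum_univ_two]
  have hw : ∀ e n, w e n ∈ S := by
    intro e n; fin_cases e
    exacts [hc n, hd n]
  have hexpand : (Matrix.of fun i => bidiag c d X (ρ i)).det =
      ∑ ε : Fin r → Fin 2, (∏ i, w (ε i) (ρ i)) *
        (Matrix.of fun i => shiftSeq (ε i : ℕ) X (ρ i)).det := by
    have := (Matrix.detRowAlternating (n := Fin r) (R := R)).toMultilinearMap.map_sum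
      (fun i (e : Fin 2) => w e (ρ i) • shiftSeq e X (ρ i))
    simp only [AlternatingMap.coe_multilinearMap, AlternatingMap.map_smul_univ, smul_eq_mul] at this
    simp only [Matrix.det, hrow]
    exact this
  rw [hexpand]
  refine S.sum_mem fun ε _ => S.mul_mem (S.prod_mem fun i _ => hw _ _) (hX.det_shiftSeq_mem ?_)
  intro i j hij
  have := (ε i).isLt
  have := (ε j).isLt
  rcases hij.lt_or_eq with h | rfl
  · have := hρ h; dsimp only; omega
  · rfl

theorem minorsIn_weightedPrefixSum (hX : MinorsIn S X) {b : ℕ → R} (hb : ∀ n, b n ∈ S) :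
    MinorsIn S (weightedPrefixSum b X) := by
  set Z : ℕ → ℕ → Fin r → R := fun N n => if n ≤ N then weightedPrefixSum b X n else X n
  have hZ_succ : ∀ N, Z (N + 1) = bidiag 1 (fun n => if n = N + 1 then b n else 0) (Z N) := by
    intro N; funext n
    rcases lt_trichotomy n (N + 1) with h | rfl | h
    · simp [Z, bidiag, h.ne, Nat.le_of_lt_succ h, h.le]
    · simp [Z, bidiag, shiftSeq, weightedPrefixSum]
    · simp [Z, bidiag, h.ne', Nat.not_le.2 h, Nat.not_le.2 (Nat.lt_of_succ_lt h)]
  have hZ : ∀ N, MinorsIn S (Z N) := by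
    intro N
    induction N with
    | zero =>
      convert hX using 1
      funext n; cases n <;> simp [Z, weightedPrefixSum]
    | succ N ih =>
      rw [hZ_succ]
      refine minorsIn_bidiag ih (fun _ => S.one_mem) fun n => ?_
      split_ifs
      exacts [hb n, S.zero_mem]
  intro ρ hρ
  have hagree : ∀ i, Z (∑ j, ρ j) (ρ i) = weightedPrefixSum b X (ρ i) := fun i =>
    if_pos (Finset.single_le_sum (fun j _ => Nat.zero_le (ρ j)) (Finset.mem_univ i))
  simpa only [hagree] using hZ (∑ j, ρ j) ρ hρ

theorem minorsIn_vecCons (hX : MinorsIn S X) :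
    MinorsIn S (fun n => Matrix.vecCons (if n = 0 then 1 else 0) (X n)) := by
  intro ρ hρ
  by_cases h0 : ρ 0 = 0
  · rw [Matrix.det_succ_column_zero, Fin.sum_univ_succ, Finset.sum_eq_zero]
    · simpa [h0, Matrix.submatrix] using hX (fun i => ρ i.succ) (hρ.comp Fin.strictMono_succ)
    · intro i _
      have := hρ (Fin.succ_pos i)
      simp [show ρ i.succ ≠ 0 by omega]
  · rw [Matrix.det_eq_zero_of_column_eq_zero 0 fun i => ?_]
    · exact S.zero_mem
    · have := hρ.monotone (Fin.zero_le i)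
      simp only [Matrix.of_apply, Matrix.cons_val_zero, ite_eq_right_iff]
      omega

end Minors

section ColumnRecurrence

variable {R : Type*} [CommRing R] {M : ℕ → ℕ → R} {t : ℕ} {b α β lam μ : ℕ → R} {r : ℕ}

theorem columns_succ_eq_weightedPrefixSum
    (hM : ∀ k, (fun n => M n (k + 1)) =
      weightedPrefixSum b (bidiag α β (bidiag lam μ (shiftSeq t fun n => M n k))))
    (κ : Fin r → ℕ) :
    (fun n j => M n (κ j + 1)) = weightedPrefixSum b
      (bidiag α β (bidiag lam μ (shiftSeq t fun n j => M n (κ j)))) := by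
  funext n j
  simp only [weightedPrefixSum_apply, bidiag_apply, shiftSeq_apply]
  exact congrFun (hM (κ j)) n

theorem columns_cons_zero_eq_weightedPrefixSum
    (hM₀ : (fun n => M n 0) = weightedPrefixSum b fun n => if n = 0 then 1 else 0)
    (hM : ∀ k, (fun n => M n (k + 1)) =
      weightedPrefixSum b (bidiag α β (bidiag lam μ (shiftSeq t fun n => M n k))))
    (κ : Fin r → ℕ) :
    (fun n j => M n (Matrix.vecCons 0 (fun j => κ j + 1) j)) =
      weightedPrefixSum b fun n => Matrix.vecCons (if n = 0 then 1 else 0)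
        (bidiag α β (bidiag lam μ (shiftSeq t fun n j => M n (κ j))) n) := by
  funext n j
  rw [weightedPrefixSum_apply]
  cases j using Fin.cases with
  | zero => simpa using congrFun hM₀ n
  | succ j =>
    simp only [Matrix.cons_val_succ]
    rw [← weightedPrefixSum_apply, ← columns_succ_eq_weightedPrefixSum hM]

theorem minorsIn_columns_of_recurrence {S : Subsemiring R} (hb : ∀ n, b n ∈ S)
    (hα : ∀ n, α n ∈ S) (hβ : ∀ n, β n ∈ S) (hlam : ∀ n, lam n ∈ S) (hμ : ∀ n, μ n ∈ S)
    (hM₀ : (fun n => M n 0) = weightedPrefixSum b fun n => if n = 0 then 1 else 0)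
    (hM : ∀ k, (fun n => M n (k + 1)) =
      weightedPrefixSum b (bidiag α β (bidiag lam μ (shiftSeq t fun n => M n k))))
    (κ : Fin r → ℕ) (hκ : StrictMono κ) : MinorsIn S fun n j => M n (κ j) := by
  have step : ∀ {r} {X : ℕ → Fin r → R}, MinorsIn S X →
      MinorsIn S (bidiag α β (bidiag lam μ (shiftSeq t X))) := fun hX =>
    minorsIn_bidiag (minorsIn_bidiag (minorsIn_shiftSeq hX t) hlam hμ) hα hβ
  obtain ⟨K, hK⟩ : ∃ K, ∀ j, κ j < K :=
    ⟨∑ i, κ i + 1, fun j => Nat.lt_succ_of_le (Finset.single_le_sum (by simp) (Finset.mem_univ j))⟩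
  induction K generalizing r with
  | zero =>
    have : IsEmpty (Fin r) := ⟨fun j => Nat.not_lt_zero _ (hK j)⟩
    intro ρ _
    rw [Matrix.det_isEmpty]
    exact S.one_mem
  | succ K ih =>
  by_cases hpos : ∀ j, 0 < κ j
  · obtain ⟨κ', rfl⟩ : ∃ κ' : Fin r → ℕ, κ = fun j => κ' j + 1 :=
      ⟨fun j => κ j - 1, funext fun j => (Nat.sub_add_cancel (hpos j)).symm⟩
    rw [columns_succ_eq_weightedPrefixSum hM]
    exact minorsIn_weightedPrefixSum (step (ih κ' (fun i j hij => Nat.succ_lt_succ_iff.1 (hκ hij))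
      fun j => Nat.succ_lt_succ_iff.1 (hK j))) hb
  · push Not at hpos
    obtain ⟨j₀, hj₀⟩ := hpos
    cases r with
    | zero => exact j₀.elim0
    | succ r =>
    obtain ⟨κ', rfl⟩ : ∃ κ' : Fin r → ℕ, κ = Matrix.vecCons 0 fun j => κ' j + 1 := by
      refine ⟨fun j => κ j.succ - 1, funext fun j => ?_⟩
      cases j using Fin.cases with
      | zero => have := hκ.monotone (Fin.zero_le j₀); simp only [Matrix.cons_val_zero]; omega
      | succ j => have := hκ (Fin.succ_pos j); simp only [Matrix.cons_val_succ]; omega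
    rw [columns_cons_zero_eq_weightedPrefixSum hM₀ hM]
    have hκ' : StrictMono κ' := fun i j hij => by simpa using hκ (Fin.succ_lt_succ_iff.2 hij)
    exact minorsIn_weightedPrefixSum
      (minorsIn_vecCons (step (ih κ' hκ' fun j => by simpa using hK j.succ))) hb

end ColumnRecurrence

section LatticeM

variable {R : Type*} [CommRing R] (t ℓ : ℕ) (a : ℕ → ℕ → R) (b : ℕ → R)

theorem latticeM_zero_right_s3 :
    (fun n => latticeM t ℓ a b n 0) =
      weightedPrefixSum b fun n => if n = 0 then (1 : R) else 0 := by
  refine eq_weightedPrefixSum fun n => ?_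
  cases n with
  | zero => simp [latticeM, shiftSeq]
  | succ n => simp [latticeM, shiftSeq, Finset.prod_Icc_succ_top, mul_comm]

theorem latticeM_succ_right_of_lt {n : ℕ} (k : ℕ) (h : n < t) : latticeM t ℓ a b n (k + 1) = 0 := by
  cases n with
  | zero => rw [latticeM, if_neg (by omega)]
  | succ n => rw [latticeM, if_pos h]

theorem latticeM_succ_right (n k : ℕ) :
    latticeM t ℓ a b n (k + 1) =
      ∑ i ∈ Finset.range (ℓ + 1), a n i * shiftSeq (t + i) (fun m => latticeM t ℓ a b m k) n +
        b n * shiftSeq 1 (fun m => latticeM t ℓ a b m (k + 1)) n := by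
  cases n with
  | zero =>
    rw [latticeM, Finset.sum_eq_single 0 (fun i _ hi => by simp [shiftSeq, hi]) (by simp)]
    split_ifs with ht <;> simp [shiftSeq, ht]
  | succ n =>
    rw [latticeM]
    split_ifs with h
    · have hb_term : shiftSeq 1 (fun m => latticeM t ℓ a b m (k + 1)) (n + 1) = 0 := by
        simp [shiftSeq, latticeM_succ_right_of_lt t ℓ a b k (Nat.lt_of_succ_lt h)]
      rw [hb_term, mul_zero, add_zero]
      exact (Finset.sum_eq_zero fun i _ => by simp [shiftSeq, show ¬t + i ≤ n + 1 by omega]).symm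
    · simp [shiftSeq, mul_ite, Nat.sub_sub]

end LatticeM

theorem sum_mul_shiftSeq_eq_bidiag_bidiag {R : Type*} [CommRing R] {t : ℕ}
    {a : ℕ → ℕ → R} {α β lam μ : ℕ → R} (h0 : ∀ n, a n 0 = α n * lam n)
    (h1 : ∀ n, 1 ≤ n → a n 1 = α n * μ n + β n * lam (n - 1))
    (h2 : ∀ n, 2 ≤ n → a n 2 = β n * μ (n - 1)) (f : ℕ → R) (n : ℕ) :
    ∑ i ∈ Finset.range 3, a n i * shiftSeq (t + i) f n =
      bidiag α β (bidiag lam μ (shiftSeq t f)) n := by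
  simp only [← shiftSeq_shiftSeq _ t]
  generalize shiftSeq t f = g
  rcases n with _ | _ | m <;> simp [Finset.sum_range_succ, bidiag, shiftSeq, h0, h1, h2] <;> ring

theorem latticeM_succ_right_eq_weightedPrefixSum {R : Type*} [CommRing R] (t : ℕ)
    {a : ℕ → ℕ → R} (b : ℕ → R) {α β lam μ : ℕ → R} (h0 : ∀ n, a n 0 = α n * lam n)
    (h1 : ∀ n, 1 ≤ n → a n 1 = α n * μ n + β n * lam (n - 1))
    (h2 : ∀ n, 2 ≤ n → a n 2 = β n * μ (n - 1)) (k : ℕ) :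
    (fun n => latticeM t 2 a b n (k + 1)) = weightedPrefixSum b
      (bidiag α β (bidiag lam μ (shiftSeq t fun n => latticeM t 2 a b n k))) :=
  eq_weightedPrefixSum fun n => by
    rw [latticeM_succ_right, sum_mul_shiftSeq_eq_bidiag_bidiag h0 h1 h2, smul_eq_mul]

def polyNonnegSubsemiring (σ : Type*) : Subsemiring (MvPolynomial σ ℝ) where
  carrier := {p | PolyNonneg p}
  zero_mem' _ := by simp
  one_mem' m := by
    classical
    rw [MvPolynomial.coeff_one]
    split_ifs <;> norm_num
  add_mem' hp hq m := by
    simpa only [MvPolynomial.coeff_add] using add_nonneg (hp m) (hq m)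
  mul_mem' hp hq m := by
    classical
    rw [MvPolynomial.coeff_mul]
    exact sum_nonneg fun _ _ => mul_nonneg (hp _) (hq _)

theorem latticeM_totallyPositive_of_ell_eq_two_general
    {σ : Type*} (t : ℕ) (a : ℕ → ℕ → MvPolynomial σ ℝ) (b : ℕ → MvPolynomial σ ℝ)
    (hb : ∀ n, PolyNonneg (b n))
    (α β lam μ : ℕ → MvPolynomial σ ℝ)
    (hα : ∀ n, PolyNonneg (α n)) (hβ : ∀ n, PolyNonneg (β n))
    (hlam : ∀ n, PolyNonneg (lam n)) (hμ : ∀ n, PolyNonneg (μ n))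
    (h0 : ∀ n, a n 0 = α n * lam n)
    (h1 : ∀ n, 1 ≤ n → a n 1 = α n * μ n + β n * lam (n - 1))
    (h2 : ∀ n, 2 ≤ n → a n 2 = β n * μ (n - 1)) :
    TP (latticeM t 2 a b) := by
  intro r _ ρ κ hρ hκ
  exact minorsIn_columns_of_recurrence (S := polyNonnegSubsemiring σ) hb hα hβ hlam hμ
    (latticeM_zero_right_s3 t 2 a b) (latticeM_succ_right_eq_weightedPrefixSum t b h0 h1 h2) κ hκ ρ hρ

/-- **Theorem (tridiagonal case, part i).**  Suppose `ℓ = 2` and the weights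
factor as `a n 0 = α n * λ n` (`n ≥ 0`),
`a n 1 = α n * μ n + β n * λ (n-1)` (`n ≥ 1`), and
`a n 2 = β n * μ (n-1)` (`n ≥ 2`) for sequences of nonnegative polynomials
`α, β, λ, μ`.  Then the weighted lattice-path matrix `M` is totally positive. -/
theorem latticeM_totallyPositive_of_ell_eq_two
    {σ : Type*} (t : ℕ) (a : ℕ → ℕ → MvPolynomial σ ℝ) (b : ℕ → MvPolynomial σ ℝ)
    (ha : ∀ n i, i ≤ 2 → PolyNonneg (a n i)) (hb : ∀ n, PolyNonneg (b n))
    (α β lam μ : ℕ → MvPolynomial σ ℝ)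
    (hα : ∀ n, PolyNonneg (α n)) (hβ : ∀ n, PolyNonneg (β n))
    (hlam : ∀ n, PolyNonneg (lam n)) (hμ : ∀ n, PolyNonneg (μ n))
    (h0 : ∀ n, a n 0 = α n * lam n)
    (h1 : ∀ n, 1 ≤ n → a n 1 = α n * μ n + β n * lam (n - 1))
    (h2 : ∀ n, 2 ≤ n → a n 2 = β n * μ (n - 1)) :
    TP (latticeM t 2 a b) :=
  latticeM_totallyPositive_of_ell_eq_two_general t a b hb α β lam μ hα hβ hlam hμ h0 h1 h2
end

section
/- Theorem (linearly factoring weights: total positivity of M). Under the linear factorization hypothesis on the weights, the weighted lattice-path matrix M is totally positive. -/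
open Finset

/-!
Total positivity is taken relative to a subsemiring `S` of "nonnegative" elements. Left
multiplication by a lower bidiagonal matrix with entries in `S` preserves it, because the
determinant is multilinear in the rows and every term of the expansion is a product of entries of
`S` times a minor (or zero, when two rows coincide); prepending the column `e₀` preserves it by
Laplace expansion. Column by column, the recurrence reads `M = G * [e₀ | A * M]`, where `G` solves
`w n = v n + b n * w (n - 1)` and is, on any finite set of rows, a product of bidiagonal matrices,
and where the factorization hypothesis makes `A` the Toeplitz matrix of
`X ^ t * ∏ j, (β j + α j * X)`, a product of bidiagonal Toeplitz matrices. Hence every finite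
window of `M` is a window of a totally positive iterate of `W ↦ G * [e₀ | A * W]` started at `0`.
-/

namespace LatticePath

variable {R : Type*} [CommRing R] (S : Subsemiring R)

def IsTotallyPositive (A : ℕ → ℕ → R) : Prop :=
  ∀ r (ρ κ : Fin r → ℕ), StrictMono ρ → StrictMono κ →
    (Matrix.of fun i j => A (ρ i) (κ j)).det ∈ S

variable {S}

lemma isTotallyPositive_zero : IsTotallyPositive S 0 := by
  intro r ρ κ _ _
  cases r with
  | zero => simp
  | succ r =>
    rw [show (Matrix.of fun i j => (0 : ℕ → ℕ → R) (ρ i) (κ j)) = 0 from rfl,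
      Matrix.det_zero]
    exact zero_mem S

lemma IsTotallyPositive.of_forall_eqOn {A : ℕ → ℕ → R}
    (h : ∀ N, ∃ B, IsTotallyPositive S B ∧ ∀ n k, n ≤ N → k ≤ N → A n k = B n k) :
    IsTotallyPositive S A := by
  intro r ρ κ hρ hκ
  obtain ⟨B, hB, hAB⟩ := h (univ.sup ρ ⊔ univ.sup κ)
  convert hB r ρ κ hρ hκ using 2
  ext i j
  exact hAB _ _ (le_sup_of_le_left (le_sup (mem_univ i)))
    (le_sup_of_le_right (le_sup (mem_univ j)))

lemma strictMono_sub_one {r : ℕ} {κ : Fin r → ℕ} (hκ : StrictMono κ) (hpos : ∀ j, 0 < κ j) :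
    StrictMono fun j => κ j - 1 := fun i j hij => by
  show κ i - 1 < κ j - 1
  have := hκ hij
  have := hpos i
  omega

lemma IsTotallyPositive.combine_adjacent_rows {A : ℕ → ℕ → R} (hA : IsTotallyPositive S A)
    {c d : ℕ → R} (hc : ∀ n, c n ∈ S) (hd : ∀ n, d n ∈ S) :
    IsTotallyPositive S fun n k => c n * A n k + d n * A (n + 1) k := by
  intro r ρ κ hρ hκ
  let rows (s : Finset (Fin r)) (i : Fin r) : ℕ := ρ i + if i ∈ s then 0 else 1
  let coef (s : Finset (Fin r)) (i : Fin r) : R := if i ∈ s then c (ρ i) else d (ρ i)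
  have hsplit : (Matrix.of fun i j => c (ρ i) * A (ρ i) (κ j) + d (ρ i) * A (ρ i + 1) (κ j)).det =
      ∑ s : Finset (Fin r), (∏ i, coef s i) * (Matrix.of fun i j => A (rows s i) (κ j)).det := by
    have hrow := (Matrix.detRowAlternating (n := Fin r) (R := R)).map_add_univ
      (fun i j => c (ρ i) * A (ρ i) (κ j)) (fun i j => d (ρ i) * A (ρ i + 1) (κ j))
    refine hrow.trans (sum_congr rfl fun s _ => ?_)
    have hsmul := (Matrix.detRowAlternating (n := Fin r) (R := R)).map_smul_univ (coef s)
      (Matrix.of fun i j => A (rows s i) (κ j))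
    rw [smul_eq_mul] at hsmul
    refine Eq.trans ?_ hsmul
    congr 1
    ext i j
    by_cases hi : i ∈ s <;> simp [rows, coef, hi]
  rw [hsplit]
  refine sum_mem fun s _ => mul_mem (prod_mem fun i _ => ?_) ?_
  · by_cases hi : i ∈ s <;> simp [coef, hi, hc, hd]
  have hmono : Monotone (rows s) := by
    intro i j hij
    rcases hij.eq_or_lt with rfl | hlt
    · exact le_rfl
    · have := hρ hlt
      simp only [rows]
      split_ifs <;> omega
  by_cases hinj : Function.Injective (rows s)
  · exact hA r _ κ (hmono.strictMono_of_injective hinj) hκ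
  · obtain ⟨i, j, hij, hne⟩ := Function.not_injective_iff.mp hinj
    rw [Matrix.det_zero_of_row_eq hne (by ext; simp [hij])]
    exact zero_mem S

def shiftDown (A : ℕ → ℕ → R) : ℕ → ℕ → R
  | 0, _ => 0
  | n + 1, k => A n k

lemma IsTotallyPositive.shiftDown {A : ℕ → ℕ → R} (hA : IsTotallyPositive S A) :
    IsTotallyPositive S (shiftDown A) := by
  intro r ρ κ hρ hκ
  by_cases hzero : ∃ i, ρ i = 0
  · obtain ⟨i, hi⟩ := hzero
    rw [Matrix.det_eq_zero_of_row_eq_zero i fun j => by simp [hi, LatticePath.shiftDown]]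
    exact zero_mem S
  push Not at hzero
  convert hA r (fun i => ρ i - 1) κ (strictMono_sub_one hρ fun i => Nat.pos_of_ne_zero (hzero i))
    hκ using 2
  ext i j
  obtain ⟨n, hn⟩ := Nat.exists_eq_succ_of_ne_zero (hzero i)
  simp [hn, LatticePath.shiftDown]

def lowerBidiagMul (c d : ℕ → R) (A : ℕ → ℕ → R) : ℕ → ℕ → R
  | 0, k => c 0 * A 0 k
  | n + 1, k => c (n + 1) * A (n + 1) k + d (n + 1) * A n k

lemma IsTotallyPositive.lowerBidiagMul {A : ℕ → ℕ → R} (hA : IsTotallyPositive S A)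
    {c d : ℕ → R} (hc : ∀ n, c n ∈ S) (hd : ∀ n, d n ∈ S) :
    IsTotallyPositive S (lowerBidiagMul c d A) := by
  convert hA.shiftDown.combine_adjacent_rows hd hc using 1
  ext n k
  cases n <;> simp [LatticePath.lowerBidiagMul, LatticePath.shiftDown, add_comm]

def consCol (A : ℕ → ℕ → R) : ℕ → ℕ → R
  | n, 0 => if n = 0 then 1 else 0
  | n, k + 1 => A n k

lemma IsTotallyPositive.consCol {A : ℕ → ℕ → R} (hA : IsTotallyPositive S A) :
    IsTotallyPositive S (consCol A) := by
  intro r ρ κ hρ hκ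
  obtain _ | r := r
  · simp
  by_cases hκ0 : κ 0 = 0
  · have hκpos : ∀ j : Fin r, 0 < κ j.succ := fun j => hκ0 ▸ hκ (Fin.succ_pos j)
    have hminor := hA r (fun i => ρ i.succ) (fun j => κ j.succ - 1) (hρ.comp Fin.strictMono_succ)
      (strictMono_sub_one (hκ.comp Fin.strictMono_succ) hκpos)
    rw [Matrix.det_succ_column_zero, Fin.sum_univ_succ, sum_eq_zero fun i _ => ?_, add_zero]
    · refine mul_mem (mul_mem (by simp) ?_) ?_
      · simp only [Matrix.of_apply, hκ0, LatticePath.consCol]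
        split_ifs <;> simp
      · convert hminor using 2
        ext i j
        obtain ⟨k, hk⟩ := Nat.exists_eq_succ_of_ne_zero (hκpos j).ne'
        simp [hk, LatticePath.consCol]
    · have : ρ i.succ ≠ 0 := (hρ (Fin.succ_pos i)).ne_bot
      simp [hκ0, LatticePath.consCol, this]
  · have hκpos : ∀ j, 0 < κ j := fun j =>
      (Nat.pos_of_ne_zero hκ0).trans_le (hκ.monotone (Fin.zero_le j))
    convert hA _ ρ (fun j => κ j - 1) hρ (strictMono_sub_one hκ hκpos) using 2
    ext i j
    obtain ⟨k, hk⟩ := Nat.exists_eq_succ_of_ne_zero (hκpos j).ne'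
    simp [hk, LatticePath.consCol]

def linRec (b v : ℕ → R) : ℕ → R
  | 0 => v 0
  | n + 1 => v (n + 1) + b (n + 1) * linRec b v n

lemma IsTotallyPositive.linRec {A : ℕ → ℕ → R} (hA : IsTotallyPositive S A) {b : ℕ → R}
    (hb : ∀ n, b n ∈ S) : IsTotallyPositive S fun n k => LatticePath.linRec b (A · k) n := by
  -- Running the recurrence up to row `m` only; each further row is one elementary bidiagonal step.
  let partialRec (m : ℕ) : ℕ → ℕ → R :=
    fun n k => if n ≤ m then LatticePath.linRec b (A · k) n else A n k
  have hpartial : ∀ m, IsTotallyPositive S (partialRec m) := by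
    intro m
    induction m with
    | zero =>
      convert hA using 1
      ext n k
      cases n <;> simp [partialRec, LatticePath.linRec]
    | succ m ih =>
      convert ih.lowerBidiagMul (c := 1) (d := fun n => if n = m + 1 then b n else 0)
        (fun _ => one_mem S) (fun n => by split_ifs <;> simp [hb]) using 1
      ext n k
      cases n with
      | zero => simp [partialRec, LatticePath.lowerBidiagMul]
      | succ n =>
        simp only [partialRec, LatticePath.lowerBidiagMul, Pi.one_apply, one_mul]
        rcases lt_trichotomy n m with h | rfl | h
        · simp [h.le, h.ne, Nat.succ_le_of_lt h]
        · simp [LatticePath.linRec]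
        · simp [show ¬ n + 1 ≤ m + 1 by omega, show ¬ n + 1 ≤ m by omega, h.ne',
            show ¬ n ≤ m by omega]
  refine IsTotallyPositive.of_forall_eqOn fun N => ⟨partialRec N, hpartial N, fun n k hn _ => ?_⟩
  simp [partialRec, hn]

section Toeplitz

open PowerSeries

noncomputable def toeplitzMul (p : R⟦X⟧) (A : ℕ → ℕ → R) : ℕ → ℕ → R :=
  fun n k => coeff n (p * PowerSeries.mk fun m => A m k)

lemma toeplitzMul_mul (p q : R⟦X⟧) (A : ℕ → ℕ → R) :
    toeplitzMul (p * q) A = toeplitzMul p (toeplitzMul q A) := by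
  ext n k
  simp only [toeplitzMul, mul_assoc]
  congr 2
  ext m
  simp

lemma toeplitzMul_C_add_C_mul_X (c d : R) (A : ℕ → ℕ → R) :
    toeplitzMul (C c + C d * X) A = lowerBidiagMul (fun _ => c) (fun _ => d) A := by
  ext n k
  cases n <;> simp [toeplitzMul, lowerBidiagMul, add_mul, mul_assoc, coeff_succ_X_mul]

lemma IsTotallyPositive.toeplitzMul_X_pow_mul_prod {ι : Type*} {A : ℕ → ℕ → R}
    (hA : IsTotallyPositive S A) (t : ℕ) (s : Finset ι) {α β : ι → R} (hα : ∀ j, α j ∈ S)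
    (hβ : ∀ j, β j ∈ S) :
    IsTotallyPositive S (toeplitzMul (X ^ t * ∏ j ∈ s, (C (β j) + C (α j) * X)) A) := by
  let Preserves (p : R⟦X⟧) : Prop :=
    ∀ A, IsTotallyPositive S A → IsTotallyPositive S (toeplitzMul p A)
  have hmul : ∀ p q, Preserves p → Preserves q → Preserves (p * q) := fun p q hp hq A hA => by
    rw [toeplitzMul_mul]
    exact hp _ (hq A hA)
  have hlin : ∀ c d, c ∈ S → d ∈ S → Preserves (C c + C d * X) := fun c d hc hd A hA => by
    rw [toeplitzMul_C_add_C_mul_X]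
    exact hA.lowerBidiagMul (fun _ => hc) (fun _ => hd)
  have hone : Preserves 1 := fun A hA => by
    convert hA
    ext n k
    simp [toeplitzMul]
  have hX : Preserves X := by simpa using hlin 0 1 (zero_mem S) (one_mem S)
  refine hmul _ _ ?_ ?_ A hA
  · induction t with
    | zero => simpa using hone
    | succ t ih => simpa [pow_succ] using hmul _ _ ih hX
  · exact prod_induction _ Preserves hmul hone fun j _ => hlin _ _ (hβ j) (hα j)

lemma toeplitzMul_X_pow_mul_sum (t ℓ : ℕ) (c : ℕ → R) (A : ℕ → ℕ → R) (n k : ℕ) :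
    toeplitzMul (X ^ t * ∑ i ∈ range (ℓ + 1), C (c i) * X ^ i) A n k =
      ∑ i ∈ range (ℓ + 1), if t + i ≤ n then c i * A (n - t - i) k else 0 := by
  simp only [toeplitzMul, mul_sum, sum_mul, map_sum]
  refine sum_congr rfl fun i _ => ?_
  rw [show X ^ t * (C (c i) * X ^ i) * PowerSeries.mk (fun m => A m k) =
      C (c i) * (X ^ (t + i) * PowerSeries.mk fun m => A m k) by ring,
    coeff_C_mul, coeff_X_pow_mul']
  split_ifs <;> simp [Nat.sub_sub]

end Toeplitz

lemma prod_add_mul_eq_sum_powersetCard {A ι : Type*} [CommSemiring A] [Fintype ι]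
    [DecidableEq ι] (f g : ι → A) (x : A) :
    ∏ j, (g j + f j * x) = ∑ i ∈ range (Fintype.card ι + 1),
      (∑ s ∈ powersetCard i univ, (∏ j ∈ s, f j) * ∏ j ∈ sᶜ, g j) * x ^ i := by
  simp_rw [add_comm (g _), prod_add, sum_powerset, card_univ, sum_mul]
  refine sum_congr rfl fun i _ => sum_congr rfl fun s hs => ?_
  rw [prod_mul_distrib, prod_const, (mem_powersetCard.mp hs).2, compl_eq_univ_sdiff]
  ring

lemma sum_C_mul_X_pow_eq_prod {ℓ : ℕ} {c : ℕ → R} {α β : Fin ℓ → R}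
    (hc : ∀ i ≤ ℓ, c i = ∑ s ∈ powersetCard i univ, (∏ j ∈ s, α j) * ∏ j ∈ sᶜ, β j) :
    ∑ i ∈ range (ℓ + 1), PowerSeries.C (c i) * PowerSeries.X ^ i =
      ∏ j, (PowerSeries.C (β j) + PowerSeries.C (α j) * PowerSeries.X) := by
  rw [prod_add_mul_eq_sum_powersetCard, Fintype.card_fin]
  refine sum_congr rfl fun i hi => ?_
  rw [hc i (Nat.lt_succ_iff.mp (mem_range.mp hi))]
  simp [map_sum, map_prod]

section Lattice

open PowerSeries

variable (t ℓ : ℕ) (a : ℕ → ℕ → R) (b : ℕ → R)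

lemma latticeM_zero_right (n : ℕ) :
    latticeM t ℓ a b n 0 = linRec b (fun m => if m = 0 then 1 else 0) n := by
  induction n with
  | zero => simp [latticeM, linRec]
  | succ n ih =>
    rw [latticeM, prod_Icc_succ_top (by omega), ← latticeM, ih]
    simp [linRec, mul_comm]

lemma latticeM_succ_right_eq_zero_of_lt {n : ℕ} (hn : n < t) (k : ℕ) :
    latticeM t ℓ a b n (k + 1) = 0 := by
  cases n with
  | zero => rw [latticeM, if_neg (by omega)]
  | succ n => rw [latticeM, if_pos hn]

lemma latticeM_succ_right (n k : ℕ) :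
    latticeM t ℓ a b n (k + 1) = linRec b (fun m => ∑ i ∈ range (ℓ + 1),
      if t + i ≤ m then a m i * latticeM t ℓ a b (m - t - i) k else 0) n := by
  induction n with
  | zero =>
    rw [latticeM, linRec, sum_eq_single 0 (fun i _ hi => if_neg (by omega)) (by simp)]
    simp
  | succ n ih =>
    rw [latticeM, linRec, ← ih]
    split_ifs with hnt
    · rw [sum_eq_zero fun i _ => if_neg (by omega),
        latticeM_succ_right_eq_zero_of_lt t ℓ a b (by omega)]
      simp
    · rfl

/-- `W ↦ G * [e₀ | A * W]` with `A` the Toeplitz matrix of `p`; `latticeM` is its fixed point. -/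
noncomputable def latticeStep (p : R⟦X⟧) (W : ℕ → ℕ → R) : ℕ → ℕ → R :=
  fun n k => linRec b (consCol (toeplitzMul p W) · k) n

lemma latticeStep_iterate_eq_latticeM {Q : R⟦X⟧}
    (ha : ∀ n, ∑ i ∈ range (ℓ + 1), C (a n i) * X ^ i = Q) (K : ℕ) :
    ∀ n k, k < K → (latticeStep b (X ^ t * Q))^[K] 0 n k = latticeM t ℓ a b n k := by
  induction K with
  | zero => intro n k hk; omega
  | succ K ih =>
    intro n k hk
    rw [Function.iterate_succ_apply', latticeStep]
    cases k with
    | zero => rw [latticeM_zero_right]; rfl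
    | succ k =>
      rw [latticeM_succ_right]
      congr 1
      ext m
      have hcol := toeplitzMul_X_pow_mul_sum t ℓ (a m) ((latticeStep b (X ^ t * Q))^[K] 0) m k
      rw [ha m] at hcol
      rw [consCol, hcol]
      refine sum_congr rfl fun i _ => ?_
      rw [ih _ _ (by omega)]

lemma IsTotallyPositive.latticeStep {W : ℕ → ℕ → R} (hW : IsTotallyPositive S W)
    (hb : ∀ n, b n ∈ S) {ι : Type*} [Fintype ι] {α β : ι → R} (hα : ∀ j, α j ∈ S)
    (hβ : ∀ j, β j ∈ S) :
    IsTotallyPositive S (latticeStep b (X ^ t * ∏ j, (C (β j) + C (α j) * X)) W) :=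
  ((hW.toeplitzMul_X_pow_mul_prod t univ hα hβ).consCol).linRec hb

theorem isTotallyPositive_latticeM (hb : ∀ n, b n ∈ S) {ι : Type*} [Fintype ι] {α β : ι → R}
    (hα : ∀ j, α j ∈ S) (hβ : ∀ j, β j ∈ S)
    (ha : ∀ n, ∑ i ∈ range (ℓ + 1), C (a n i) * X ^ i = ∏ j, (C (β j) + C (α j) * X)) :
    IsTotallyPositive S (latticeM t ℓ a b) := by
  let step := latticeStep b (X ^ t * ∏ j, (C (β j) + C (α j) * X))
  have hiter : ∀ K, IsTotallyPositive S (step^[K] 0) := by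
    intro K
    induction K with
    | zero => exact isTotallyPositive_zero
    | succ K ih =>
      rw [Function.iterate_succ_apply']
      exact ih.latticeStep t b hb hα hβ
  refine IsTotallyPositive.of_forall_eqOn fun N => ⟨step^[N + 1] 0, hiter _, fun n k _ hk => ?_⟩
  exact (latticeStep_iterate_eq_latticeM t ℓ a b ha _ n k (by omega)).symm

end Lattice

def nonnegCoeffs (σ R : Type*) [CommSemiring R] [PartialOrder R] [IsOrderedRing R] :
    Subsemiring (MvPolynomial σ R) where
  carrier := {p | ∀ m, 0 ≤ p.coeff m}
  zero_mem' _ := by simp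
  one_mem' m := by
    classical
    rw [MvPolynomial.coeff_one]
    split_ifs <;> simp
  add_mem' hp hq m := by
    rw [MvPolynomial.coeff_add]
    exact add_nonneg (hp m) (hq m)
  mul_mem' hp hq m := by
    classical
    rw [MvPolynomial.coeff_mul]
    exact sum_nonneg fun x _ => mul_nonneg (hp _) (hq _)

end LatticePath

open LatticePath

/-- **Theorem (linearly factoring weights: total positivity of `M`).**
If there are nonnegative polynomials `α j, β j` (`j ∈ Fin ℓ`) with
`a n i = Σ_{S ⊆ Fin ℓ, |S| = i} (∏_{j ∈ S} α j) * (∏_{j ∉ S} β j)` for every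
`n` and `0 ≤ i ≤ ℓ` (equivalently `Σ_i (a n i) z^i = ∏_j (α j · z + β j)`),
then the weighted lattice-path matrix `M` is totally positive. -/
theorem latticeM_totallyPositive_of_linear_factorization
    {σ : Type*} (t ℓ : ℕ) (a : ℕ → ℕ → MvPolynomial σ ℝ) (b : ℕ → MvPolynomial σ ℝ)
    (hb : ∀ n, PolyNonneg (b n))
    (α β : Fin ℓ → MvPolynomial σ ℝ)
    (hα : ∀ j, PolyNonneg (α j)) (hβ : ∀ j, PolyNonneg (β j))
    (hfact : ∀ n i, i ≤ ℓ → a n i =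
      ∑ S ∈ Finset.powersetCard i (Finset.univ : Finset (Fin ℓ)),
        (∏ j ∈ S, α j) * ∏ j ∈ Sᶜ, β j) :
    TP (latticeM t ℓ a b) := by
  have hTP : IsTotallyPositive (nonnegCoeffs σ ℝ) (latticeM t ℓ a b) :=
    isTotallyPositive_latticeM t ℓ a b hb hα hβ fun n => sum_C_mul_X_pow_eq_prod (hfact n)
  exact fun r _ ρ κ hρ hκ => hTP r ρ κ hρ hκ
end
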